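/- For every natural number k and z a standard normal random variable, E[(He_{2k+1}(z))² · He_{2k}(z)] ≠ 0. -/

import Mathlib

open MeasureTheory ProbabilityTheory

/-- The `n`-th probabilists' Hermite polynomial as a function `ℝ → ℝ`. -/
noncomputable def He (n : ℕ) (z : ℝ) : ℝ := Polynomial.aeval z (Polynomial.hermite n)

/-!
Gaussian integration by parts, `E[X p] = E[p']`, iterates to `E[He_n q] = E[q⁽ⁿ⁾]`. As
`He_n' = n He_{n-1}`, the Leibniz rule writes `E[He_{2j} He_n²] = E[(He_n²)⁽²ʲ⁾]` as a sum of
nonnegative multiples of `E[He_a He_b] = δ_ab a!`, and for `j ≤ n` the middle term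
(`a = b = n - j`) is strictly positive.
-/

open Polynomial
open scoped NNReal Nat

namespace ProbabilityTheory

variable (μ : ℝ) (v : ℝ≥0)

lemma integrable_eval_gaussianReal (p : ℝ[X]) :
    Integrable (fun x ↦ p.eval x) (gaussianReal μ v) := by
  have hpow (n : ℕ) : Integrable (fun x : ℝ ↦ x ^ n) (gaussianReal μ v) := by
    refine (integrable_norm_iff (by fun_prop)).mp ?_
    simpa only [norm_pow, id] using
      (memLp_id_gaussianReal (μ := μ) (v := v) n).integrable_norm_pow'
  simp_rw [eval_eq_sum_range]
  exact integrable_finsetSum _ fun i _ ↦ (hpow i).const_mul _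

lemma hasDerivAt_gaussianPDFReal (x : ℝ) :
    HasDerivAt (gaussianPDFReal μ v) (-((x - μ) / v) * gaussianPDFReal μ v x) x := by
  have hexp : HasDerivAt (fun y ↦ -(y - μ) ^ 2 / (2 * v)) (-((x - μ) / v)) x := by
    refine ((((hasDerivAt_id x).sub_const μ).pow 2).neg.div_const (2 * (v : ℝ))).congr_deriv ?_
    simp only [id, Nat.cast_ofNat]
    ring
  rw [gaussianPDFReal_def]
  exact (hexp.exp.const_mul _).congr_deriv (by ring)

lemma integrable_gaussianPDFReal_mul_eval (p : ℝ[X]) :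
    Integrable (fun x ↦ gaussianPDFReal μ v x * p.eval x) := by
  rcases eq_or_ne v 0 with rfl | hv
  · simp
  have h := integrable_eval_gaussianReal μ v p
  rw [gaussianReal_of_var_ne_zero μ hv, integrable_withDensity_iff_integrable_smul'
    (measurable_gaussianPDF μ v) (ae_of_all _ fun _ ↦ gaussianPDF_lt_top)] at h
  simpa only [toReal_gaussianPDF, smul_eq_mul] using h

theorem integral_sub_mul_eval_gaussianReal (p : ℝ[X]) :
    ∫ x, (x - μ) * p.eval x ∂gaussianReal μ v =
      v * ∫ x, (derivative p).eval x ∂gaussianReal μ v := by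
  rcases eq_or_ne v 0 with rfl | hv
  · simp
  rw [integral_gaussianReal_eq_integral_smul hv, integral_gaussianReal_eq_integral_smul hv,
    ← integral_const_mul]
  have hint := integrable_gaussianPDFReal_mul_eval μ v
  have hint_sub : Integrable fun x ↦ gaussianPDFReal μ v x * ((x - μ) * p.eval x) := by
    have h := hint ((X - C μ) * p)
    simp only [eval_mul, eval_sub, eval_X, eval_C] at h
    exact h
  have hderiv (x : ℝ) : HasDerivAt (fun y ↦ v * (gaussianPDFReal μ v y * p.eval y))
      (v * (gaussianPDFReal μ v x * (derivative p).eval x) -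
        gaussianPDFReal μ v x * ((x - μ) * p.eval x)) x := by
    refine (((hasDerivAt_gaussianPDFReal μ v x).mul (p.hasDerivAt x)).const_mul _).congr_deriv ?_
    field_simp
    ring
  have hzero := integral_eq_zero_of_hasDerivAt_of_integrable hderiv
    (((hint _).const_mul _).sub hint_sub) ((hint p).const_mul _)
  rw [integral_sub ((hint _).const_mul _) hint_sub, sub_eq_zero] at hzero
  simpa only [smul_eq_mul] using hzero.symm

end ProbabilityTheory

namespace Polynomial

theorem derivative_hermite_succ (n : ℕ) :
    derivative (hermite (n + 1)) = (n + 1) • hermite n := by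
  induction n with
  | zero => simp
  | succ n ih =>
    rw [hermite_succ (n + 1), derivative_sub, derivative_mul, derivative_X, one_mul, ih,
      derivative_smul, hermite_succ n]
    simp only [nsmul_eq_mul]
    push_cast
    ring

theorem derivative_hermite (n : ℕ) : derivative (hermite n) = n • hermite (n - 1) := by
  cases n with
  | zero => simp [hermite_zero]
  | succ n => exact derivative_hermite_succ n

theorem iterate_derivative_hermite (n j : ℕ) :
    derivative^[j] (hermite n) = n.descFactorial j • hermite (n - j) := by
  induction j with
  | zero => simp
  | succ j ih =>
    rw [Function.iterate_succ_apply', ih, derivative_smul, derivative_hermite, smul_smul,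
      Nat.descFactorial_succ, Nat.sub_sub, mul_comm]

end Polynomial

noncomputable def stdGaussianIntegral : ℝ[X] →ₗ[ℝ] ℝ where
  toFun p := ∫ x, p.eval x ∂gaussianReal 0 1
  map_add' p q := by
    simp only [eval_add]
    exact integral_add (integrable_eval_gaussianReal 0 1 p) (integrable_eval_gaussianReal 0 1 q)
  map_smul' c p := by simp [integral_const_mul]

lemma stdGaussianIntegral_apply (p : ℝ[X]) :
    stdGaussianIntegral p = ∫ x, p.eval x ∂gaussianReal 0 1 := rfl

lemma stdGaussianIntegral_X_mul (p : ℝ[X]) :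
    stdGaussianIntegral (X * p) = stdGaussianIntegral (derivative p) := by
  simpa [stdGaussianIntegral_apply] using integral_sub_mul_eval_gaussianReal 0 1 p

noncomputable def realHermite (n : ℕ) : ℝ[X] := (hermite n).map (algebraMap ℤ ℝ)

lemma He_eq_eval_realHermite (n : ℕ) (z : ℝ) : He n z = (realHermite n).eval z := by
  rw [He, realHermite, eval_map, aeval_def]

lemma realHermite_zero : realHermite 0 = 1 := by simp [realHermite]

lemma realHermite_succ (n : ℕ) :
    realHermite (n + 1) = X * realHermite n - derivative (realHermite n) := by
  simp [realHermite, hermite_succ, derivative_map]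

lemma iterate_derivative_realHermite (n j : ℕ) :
    derivative^[j] (realHermite n) = n.descFactorial j • realHermite (n - j) := by
  rw [realHermite, iterate_derivative_map, iterate_derivative_hermite, nsmul_eq_mul,
    Polynomial.map_mul, Polynomial.map_natCast, ← nsmul_eq_mul, realHermite]

lemma stdGaussianIntegral_realHermite_mul (n : ℕ) (q : ℝ[X]) :
    stdGaussianIntegral (realHermite n * q) = stdGaussianIntegral (derivative^[n] q) := by
  induction n generalizing q with
  | zero => simp [realHermite_zero]
  | succ n ih =>
    rw [realHermite_succ, sub_mul, mul_assoc, map_sub, stdGaussianIntegral_X_mul,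
      derivative_mul, map_add, add_sub_cancel_left, ih, Function.iterate_succ_apply]

lemma stdGaussianIntegral_realHermite (n : ℕ) :
    stdGaussianIntegral (realHermite n) = if n = 0 then 1 else 0 := by
  split_ifs with hn
  · simp [hn, realHermite_zero, stdGaussianIntegral_apply]
  · rw [← mul_one (realHermite n), stdGaussianIntegral_realHermite_mul,
      iterate_derivative_one (Nat.pos_of_ne_zero hn), map_zero]

lemma stdGaussianIntegral_realHermite_mul_realHermite (m n : ℕ) :
    stdGaussianIntegral (realHermite m * realHermite n) = if m = n then (n ! : ℝ) else 0 := by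
  rw [stdGaussianIntegral_realHermite_mul, iterate_derivative_realHermite, map_nsmul,
    stdGaussianIntegral_realHermite]
  split_ifs with hnm hmn hmn
  · simp [hmn, Nat.descFactorial_self]
  · simp [Nat.descFactorial_eq_zero_iff_lt.mpr (by omega : n < m)]
  · omega
  · simp

lemma stdGaussianIntegral_iterate_derivative_realHermite_mul (n a b : ℕ) :
    stdGaussianIntegral (derivative^[a] (realHermite n) * derivative^[b] (realHermite n)) =
      (n.descFactorial a * n.descFactorial b) • if n - a = n - b then ((n - b)! : ℝ) else 0 := by
  rw [iterate_derivative_realHermite, iterate_derivative_realHermite, smul_mul_smul_comm,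
    map_nsmul, stdGaussianIntegral_realHermite_mul_realHermite]

lemma stdGaussianIntegral_realHermite_mul_sq_pos {j n : ℕ} (h : j ≤ n) :
    0 < stdGaussianIntegral (realHermite (2 * j) * realHermite n ^ 2) := by
  rw [stdGaussianIntegral_realHermite_mul, sq, iterate_derivative_mul, map_sum]
  refine Finset.sum_pos' (fun i _ ↦ ?_) ⟨j, Finset.mem_range.mpr (by omega), ?_⟩
  · rw [map_nsmul, stdGaussianIntegral_iterate_derivative_realHermite_mul]
    split_ifs <;> positivity
  · rw [map_nsmul, stdGaussianIntegral_iterate_derivative_realHermite_mul,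
      show 2 * j - j = j by omega, if_pos rfl]
    have hchoose := Nat.choose_pos (by omega : j ≤ 2 * j)
    have hdesc := Nat.descFactorial_pos.mpr h
    rw [nsmul_eq_mul, nsmul_eq_mul]
    positivity

/-- For every `k`, `E[(He_{2k+1}(z))² · He_{2k}(z)] ≠ 0` where `z ∼ N(0,1)`. -/
theorem hermite_square_times_prev_ne_zero (k : ℕ) :
    ∫ z, (He (2 * k + 1) z) ^ 2 * He (2 * k) z ∂(gaussianReal 0 1) ≠ 0 := by
  have hpos := stdGaussianIntegral_realHermite_mul_sq_pos (by omega : k ≤ 2 * k + 1)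
  simp only [stdGaussianIntegral_apply, eval_mul, eval_pow, ← He_eq_eval_realHermite] at hpos
  simp_rw [mul_comm _ (He (2 * k) _)]
  exact hpos.ne'
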